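/- Let u be an aperiodic sequence over a finite alphabet A. Then there exist a sequence y : ℕ → A and two distinct letters a, b ∈ A such that for every n ∈ ℕ, writing g = y(n−1)⋯y(1)y(0) (the length-n suffix of the left-sided sequence ⋯y(2)y(1)y(0)), both words ga and gb occur infinitely many times in u. -/

import Mathlib

namespace ReflPaper

variable {A : Type*}

/-- The factor of `u` of length `n` at position `i`: `u(i) u(i+1) ⋯ u(i+n-1)`. -/
def factorAt (u : ℕ → A) (n i : ℕ) : List A :=
  (List.range n).map (fun k => u (i + k))

/-- The word `w` occurs in the sequence `u` at position `i`. -/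
def OccursAt (u : ℕ → A) (w : List A) (i : ℕ) : Prop :=
  w = factorAt u w.length i

/-- The language of `u`: the set of all factors of `u`. -/
def Lang (u : ℕ → A) : Set (List A) := {w | ∃ i, OccursAt u w i}

/-- The set of factors of `u` of length `n`. -/
def LangN (u : ℕ → A) (n : ℕ) : Set (List A) := {w | w.length = n ∧ w ∈ Lang u}

/-- The word `w` occurs infinitely many times in `u`. -/
def OccursInf (u : ℕ → A) (w : List A) : Prop := {i | OccursAt u w i}.Infinite

/-- `u` is eventually periodic. -/
def EventuallyPeriodic (u : ℕ → A) : Prop :=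
  ∃ N p : ℕ, 1 ≤ p ∧ ∀ i, N ≤ i → u (i + p) = u i

/-- Two words are reflectively equivalent if one equals the other or its reversal. -/
def ReflEquiv (w v : List A) : Prop := w = v ∨ w = v.reverse

/-- Reflective equivalence as a setoid on words. -/
def reflSetoid (A : Type*) : Setoid (List A) where
  r := ReflEquiv
  iseqv := by
    constructor
    · intro w; exact Or.inl rfl
    · intro w v h
      rcases h with h | h
      · exact Or.inl h.symm
      · subst h; simp [ReflEquiv]
    · intro w v x h1 h2
      rcases h1 with h1 | h1 <;> rcases h2 with h2 | h2 <;> subst h1 <;>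
        simp [ReflEquiv, h2]

/-- The number of reflective-equivalence classes of words in a set `S`. -/
noncomputable def nClasses (S : Set (List A)) : ℕ :=
  Set.ncard (Quotient.mk (reflSetoid A) '' S)

/-- The reflection complexity `r_u(n)`. -/
noncomputable def reflComplexity (u : ℕ → A) (n : ℕ) : ℕ := nClasses (LangN u n)

/-- The factor complexity `C_u(n) = #L_n(u)`. -/
noncomputable def factorComplexity (u : ℕ → A) (n : ℕ) : ℕ := (LangN u n).ncard

/-- The palindromic complexity `P_u(n)`. -/
noncomputable def palComplexity (u : ℕ → A) (n : ℕ) : ℕ :=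
  Set.ncard {w ∈ LangN u n | w.reverse = w}

/-- Both-sided extensions of `w` in the language of `u`. -/
def Bext (u : ℕ → A) (w : List A) : Set (List A) :=
  {x ∈ Lang u | ∃ a b : A, x = a :: (w ++ [b])}

/-- Right extensions of `w` in the language of `u`. -/
def Rext (u : ℕ → A) (w : List A) : Set (List A) :=
  {x ∈ Lang u | ∃ a : A, x = w ++ [a]}

/-- `T(w)`: the number of reflective-equivalence classes of `Bext(w) ∪ Bext(w̄)`. -/
noncomputable def TT (u : ℕ → A) (w : List A) : ℕ :=
  nClasses (Bext u w ∪ Bext u w.reverse)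

/-- `w` is a right special factor of `u`. -/
def RightSpecial (u : ℕ → A) (w : List A) : Prop :=
  ∃ a b : A, a ≠ b ∧ w ++ [a] ∈ Lang u ∧ w ++ [b] ∈ Lang u

/-- `w` is a left special factor of `u`. -/
def LeftSpecial (u : ℕ → A) (w : List A) : Prop :=
  ∃ a b : A, a ≠ b ∧ a :: w ∈ Lang u ∧ b :: w ∈ Lang u

/-- `u` is Sturmian: `C_u(n) = n + 1` for all `n`. -/
def Sturmian (u : ℕ → A) : Prop := ∀ n, factorComplexity u n = n + 1

/-- `u` is quasi-Sturmian: `C_u(n) = n + c` eventually. -/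
def QuasiSturmian (u : ℕ → A) : Prop :=
  ∃ n₀ c : ℕ, ∀ n, n₀ ≤ n → factorComplexity u n = n + c


set_option linter.unusedSectionVars false

section Aux
variable {A : Type*}

@[simp] lemma factorAt_length (u : ℕ → A) (n i : ℕ) : (factorAt u n i).length = n := by
  simp [factorAt]

lemma occursAt_factorAt (u : ℕ → A) (n i : ℕ) : OccursAt u (factorAt u n i) i := by
  unfold OccursAt
  rw [factorAt_length]

lemma factorAt_add (u : ℕ → A) (m n i : ℕ) :
    factorAt u (m + n) i = factorAt u m i ++ factorAt u n (i + m) := by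
  unfold factorAt
  rw [List.range_add, List.map_append, List.map_map]
  congr 1
  apply List.map_congr_left
  intro k _
  simp [Function.comp]
  ring_nf

lemma factorAt_succ (u : ℕ → A) (n i : ℕ) :
    factorAt u (n + 1) i = factorAt u n i ++ [u (i + n)] := by
  rw [factorAt_add]; rfl

lemma factorAt_succ' (u : ℕ → A) (n i : ℕ) :
    factorAt u (n + 1) i = u i :: factorAt u n (i + 1) := by
  rw [show n + 1 = 1 + n by ring, factorAt_add]
  simp [factorAt, List.range_succ]

lemma occursAt_append (u : ℕ → A) (v w : List A) (i : ℕ) :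
    OccursAt u (v ++ w) i ↔ OccursAt u v i ∧ OccursAt u w (i + v.length) := by
  unfold OccursAt
  rw [List.length_append, factorAt_add]
  constructor
  · intro h
    have := List.append_inj h (by simp)
    exact ⟨this.1, this.2⟩
  · intro ⟨h1, h2⟩
    rw [← h1, ← h2]


lemma occursAt_singleton (u : ℕ → A) (a : A) (i : ℕ) :
    OccursAt u [a] i ↔ a = u i := by
  unfold OccursAt
  simp [factorAt, List.range_succ]

/-- suffix closure -/
lemma occursInf_suffix {u : ℕ → A} {x w : List A} (h : OccursInf u (x ++ w)) :
    OccursInf u w := by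
  have : (fun i => i + x.length) '' {i | OccursAt u (x ++ w) i} ⊆ {i | OccursAt u w i} := by
    rintro _ ⟨i, hi, rfl⟩
    exact ((occursAt_append u x w i).mp hi).2
  exact Set.Infinite.mono this (Set.Infinite.image (fun a _ b _ h => by omega) h)

variable [Fintype A]

/-- pigeonhole right extension -/
lemma occursInf_extend {u : ℕ → A} {w : List A} (h : OccursInf u w) :
    ∃ a, OccursInf u (w ++ [a]) := by
  by_contra hc
  push_neg at hc
  simp only [OccursInf, Set.not_infinite] at hc
  have : {i | OccursAt u w i} ⊆ ⋃ a : A, {i | OccursAt u (w ++ [a]) i} := by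
    intro i hi
    refine Set.mem_iUnion.mpr ⟨u (i + w.length), ?_⟩
    rw [Set.mem_setOf_eq, occursAt_append]
    exact ⟨hi, (occursAt_singleton u _ _).mpr rfl⟩
  exact h (Set.Finite.subset (Set.finite_iUnion hc) this)

lemma finite_length_eq (n : ℕ) : {w : List A | w.length = n}.Finite := by
  apply Set.Finite.subset (Set.finite_range (List.ofFn : (Fin n → A) → List A))
  intro w hw
  simp only [Set.mem_setOf_eq] at hw
  subst hw
  exact ⟨w.get, List.ofFn_get w⟩

/-- beyond some point, all factors of length n occur infinitely often -/
lemma exists_bound (u : ℕ → A) (n : ℕ) :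
    ∃ N, ∀ i, N ≤ i → OccursInf u (factorAt u n i) := by
  have hfin : (⋃ w ∈ {w : List A | w.length = n ∧ ¬ OccursInf u w},
      {i | OccursAt u w i}).Finite := by
    apply Set.Finite.biUnion (Set.Finite.subset (finite_length_eq n) (fun w hw => hw.1))
    intro w hw
    exact Set.not_infinite.mp hw.2
  obtain ⟨N, hN⟩ := hfin.bddAbove
  refine ⟨N + 1, fun i hi => ?_⟩
  by_contra hc
  have : i ∈ ⋃ w ∈ {w : List A | w.length = n ∧ ¬ OccursInf u w}, {i | OccursAt u w i} := by
    refine Set.mem_biUnion ⟨factorAt_length u n i, hc⟩ (occursAt_factorAt u n i)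
  exact absurd (hN this) (by omega)



lemma exists_special (u : ℕ → A) (hu : ¬ EventuallyPeriodic u) (n : ℕ) :
    ∃ (w : List A) (a b : A), w.length = n ∧ a ≠ b ∧
      OccursInf u (w ++ [a]) ∧ OccursInf u (w ++ [b]) := by
  by_contra hc
  push_neg at hc
  apply hu
  obtain ⟨N₁, hN₁⟩ := exists_bound u n
  obtain ⟨N₂, hN₂⟩ := exists_bound u (n + 1)
  set N := max N₁ N₂ with hN
  -- determinism
  have hdet : ∀ i j, N ≤ i → N ≤ j → factorAt u n i = factorAt u n j →
      u (i + n) = u (j + n) := by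
    intro i j hi hj hij
    by_contra hab
    have h1 : OccursInf u (factorAt u n i ++ [u (i + n)]) := by
      rw [← factorAt_succ]; exact hN₂ i (le_trans (le_max_right _ _) hi)
    have h2 : OccursInf u (factorAt u n i ++ [u (j + n)]) := by
      rw [hij, ← factorAt_succ]; exact hN₂ j (le_trans (le_max_right _ _) hj)
    exact hc (factorAt u n i) (u (i + n)) (u (j + n)) (factorAt_length u n i) hab h1 h2
  -- repetition
  obtain ⟨i, hi, j, hj, hij, hfij⟩ :
      ∃ i ∈ Set.Ici N, ∃ j ∈ Set.Ici N, i ≠ j ∧ factorAt u n i = factorAt u n j := by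
    apply Set.Infinite.exists_ne_map_eq_of_mapsTo (Set.Ici_infinite N)
      (t := {w : List A | w.length = n}) (fun i _ => factorAt_length u n i)
      (finite_length_eq n)
  -- wlog i < j
  wlog hlt : i < j generalizing i j
  · exact this j hj i hi hij.symm hfij.symm (by omega)
  -- propagate
  have key : ∀ m, factorAt u n (i + m) = factorAt u n (j + m) := by
    intro m
    induction m with
    | zero => simpa using hfij
    | succ m ih =>
      have q := hdet (i + m) (j + m) (by simp at hi; omega) (by simp at hj; omega) ih
      have h1 : factorAt u (n + 1) (i + m) = factorAt u (n + 1) (j + m) := by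
        rw [factorAt_succ, factorAt_succ, ih, q]
      rw [factorAt_succ', factorAt_succ'] at h1
      have := (List.cons.injEq _ _ _ _).mp h1
      rw [show i + (m + 1) = i + m + 1 by omega, show j + (m + 1) = j + m + 1 by omega]
      exact this.2
  refine ⟨i + n, j - i, by omega, fun k hk => ?_⟩
  have q : u (i + (k - i - n) + n) = u (j + (k - i - n) + n) := by
    have h1 := key (k - i - n)
    have := congrArg (fun l => l ++ [u (i + (k - i - n) + n)]) h1
    -- easier: use hdet
    exact hdet (i + (k - i - n)) (j + (k - i - n)) (by simp at hi; omega)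
      (by simp at hj; omega) h1
  rw [show k + (j - i) = j + (k - i - n) + n by omega, ← q]
  congr 1
  omega

lemma occursInf_drop {u : ℕ → A} {w s : List A} (k : ℕ) (h : OccursInf u (w ++ s)) :
    OccursInf u (w.drop k ++ s) := by
  apply occursInf_suffix (x := w.take k)
  rwa [← List.append_assoc, List.take_append_drop]

/-- a single pair works for all lengths -/
lemma exists_pair (u : ℕ → A) (hu : ¬ EventuallyPeriodic u) :
    ∃ a b : A, a ≠ b ∧ ∀ n, ∃ w : List A, w.length = n ∧
      OccursInf u (w ++ [a]) ∧ OccursInf u (w ++ [b]) := by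
  classical
  set S : ℕ → Set (A × A) := fun n => {p | p.1 ≠ p.2 ∧ ∃ w : List A, w.length = n ∧
      OccursInf u (w ++ [p.1]) ∧ OccursInf u (w ++ [p.2])} with hS
  have hanti : ∀ m n, m ≤ n → S n ⊆ S m := by
    intro m n hmn p hp
    obtain ⟨hab, w, hw, h1, h2⟩ := hp
    exact ⟨hab, w.drop (n - m), by simp [hw]; omega, occursInf_drop _ h1, occursInf_drop _ h2⟩
  have hne : ∀ n, (S n).Nonempty := by
    intro n
    obtain ⟨w, a, b, hw, hab, h1, h2⟩ := exists_special u hu n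
    exact ⟨(a, b), hab, w, hw, h1, h2⟩
  by_contra hc
  push_neg at hc
  have hall : ∀ p : A × A, ∃ n, p ∉ S n := by
    intro p
    by_contra hp
    push_neg at hp
    obtain ⟨hab, -⟩ := hp 0
    exact absurd (fun n => ((hp n).2)) (by simpa using hc p.1 p.2 hab)
  choose f hf using hall
  set N := Finset.univ.sup f with hNdef
  obtain ⟨p, hp⟩ := hne N
  exact hf p (hanti (f p) N (Finset.le_sup (Finset.mem_univ p)) hp)

open CategoryTheory Opposite in
lemma konig (u : ℕ → A) (a b : A)
    (h : ∀ n, ∃ w : List A, w.length = n ∧ OccursInf u (w ++ [a]) ∧ OccursInf u (w ++ [b])) :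
    ∃ s : ∀ n : ℕ, List A, (∀ n, (s n).length = n ∧ OccursInf u (s n ++ [a]) ∧
      OccursInf u (s n ++ [b])) ∧ ∀ n, (s (n + 1)).drop 1 = s n := by
  let F : ℕᵒᵖ ⥤ Type _ :=
    { obj := fun n => {w : List A // w.length = n.unop ∧ OccursInf u (w ++ [a]) ∧
        OccursInf u (w ++ [b])}
      map := fun {n m} f => TypeCat.ofHom fun w => ⟨w.val.drop (n.unop - m.unop), by
        have hle : m.unop ≤ n.unop := leOfHom f.unop
        obtain ⟨h1, h2, h3⟩ := w.2
        exact ⟨by simp [h1]; omega, occursInf_drop _ h2, occursInf_drop _ h3⟩⟩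
      map_id := by intro n; refine ConcreteCategory.hom_ext _ _ fun w => ?_; apply Subtype.ext; simp
      map_comp := by
        intro n m k f g
        refine ConcreteCategory.hom_ext _ _ fun w => ?_
        apply Subtype.ext
        have h1 : m.unop ≤ n.unop := leOfHom f.unop
        have h2 : k.unop ≤ m.unop := leOfHom g.unop
        simp only [types_comp_apply, TypeCat.ofHom_apply, List.drop_drop]
        congr 1
        omega }
  have hfin : ∀ n : ℕᵒᵖ, Finite (F.obj n) := by
    intro n
    have : {w : List A | w.length = n.unop ∧ OccursInf u (w ++ [a]) ∧
        OccursInf u (w ++ [b])}.Finite :=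
      Set.Finite.subset (finite_length_eq n.unop) (fun w hw => hw.1)
    exact this.to_subtype
  have hnonempty : ∀ n : ℕᵒᵖ, Nonempty (F.obj n) := by
    intro n
    obtain ⟨w, hw⟩ := h n.unop
    exact ⟨⟨w, hw⟩⟩
  obtain ⟨s, hs⟩ := nonempty_sections_of_finite_inverse_system F
  refine ⟨fun n => (s (op n)).val, fun n => (s (op n)).2, fun n => ?_⟩
  have h0 : (F.map ((homOfLE (Nat.le_succ n)).op : op (n + 1) ⟶ op n)) (s (op (n + 1)))
      = s (op n) := hs _
  have h2 := congrArg Subtype.val h0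
  simpa [F, Nat.succ_sub] using h2

end Aux

/-- for an aperiodic `u` there is a left-sided sequence `⋯y(2)y(1)y(0)`
and two distinct letters `a, b` such that `(suffix of y)·a` and `(suffix of y)·b`
occur infinitely many times in `u`, for every suffix `y(n-1)⋯y(1)y(0)`. -/
theorem stmt7 {A : Type*} [Fintype A] (u : ℕ → A) (hu : ¬ EventuallyPeriodic u) :
    ∃ (y : ℕ → A) (a b : A), a ≠ b ∧
      ∀ n : ℕ, OccursInf u ((factorAt y n 0).reverse ++ [a]) ∧
        OccursInf u ((factorAt y n 0).reverse ++ [b]) := by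
  obtain ⟨a, b, hab, hall⟩ := exists_pair u hu
  obtain ⟨s, hs, hcompat⟩ := konig u a b hall
  have hne : ∀ n, s (n + 1) ≠ [] := by
    intro n h
    have := (hs (n + 1)).1
    rw [h] at this
    simp at this
  refine ⟨fun n => (s (n + 1)).head (hne n), a, b, hab, ?_⟩
  have key : ∀ n, (factorAt (fun n => (s (n + 1)).head (hne n)) n 0).reverse = s n := by
    intro n
    induction n with
    | zero =>
      have := (hs 0).1
      simp only [factorAt, List.range_zero, List.map_nil, List.reverse_nil]
      exact (List.length_eq_zero_iff.mp this).symm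
    | succ n ih =>
      have hcons : s (n + 1) = (s (n + 1)).head (hne n) :: s n := by
        conv_lhs => rw [← List.cons_head_tail (hne n)]
        rw [← List.drop_one, hcompat n]
      rw [factorAt_succ, hcons, List.reverse_append, List.reverse_singleton,
        List.singleton_append, zero_add, ih]
  intro n
  rw [key n]
  exact ⟨(hs n).2.1, (hs n).2.2⟩


end ReflPaper
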